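/- Let E₀, E₁, E₂, E₃ be finite-dimensional complex inner product spaces, φ₁ : E₁ → E₀, φ₂ : E₂ → E₁, φ₃ : E₃ → E₂ linear maps, w ∈ ℂ, and s ∈ {1, −1}. Define η : E₂ × E₁ → E₁ × E₀ by η(ξ₁, ξ₂) = (φ₂ ξ₁ + s·w·ξ₂, φ₁ ξ₂) and η' : E₃ × E₂ → E₂ × E₁ by η'(ξ₁, ξ₂) = (φ₃ ξ₁ − s·w·ξ₂, φ₂ ξ₂). Assume that A := φ₂† φ₂ + φ₃ φ₃† + |w|²·id (an endomorphism of E₂) and B' := φ₂ φ₂† + φ₁† φ₁ + |w|²·id (an endomorphism of E₁) are invertible. Then η' ∘ η'† + η† ∘ η is invertible, and the map σ := (η' ∘ η'† + η† ∘ η)⁻¹ ∘ η† : E₁ × E₀ → E₂ × E₁ satisfies σ(0, ζ) = (0, (B')⁻¹(φ₁† ζ)) for every ζ ∈ E₀; in particular the component of σ mapping E₀ to E₂ is zero. -/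

import Mathlib

/-!
The Laplacian `η' η'† + η† η` is block diagonal, equal to `diag(A, B')` once `|s| = 1`: the mixed
terms `± s w φ₂†` and `± conj(s w) φ₂` contributed by `η` and by `η'` (which carries the sign `-s`)
cancel. Its inverse is therefore `diag(A⁻¹, B'⁻¹)`, and since `η† (0, ζ) = (0, φ₁† ζ)` we get
`σ (0, ζ) = (0, B'⁻¹ φ₁† ζ)`.
-/

noncomputable section

variable {E₀ E₁ E₂ E₃ : Type*}
  [NormedAddCommGroup E₀] [InnerProductSpace ℂ E₀] [FiniteDimensional ℂ E₀]
  [NormedAddCommGroup E₁] [InnerProductSpace ℂ E₁] [FiniteDimensional ℂ E₁]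
  [NormedAddCommGroup E₂] [InnerProductSpace ℂ E₂] [FiniteDimensional ℂ E₂]
  [NormedAddCommGroup E₃] [InnerProductSpace ℂ E₃] [FiniteDimensional ℂ E₃]

/-- The differential `(ξ₁, ξ₂) ↦ (φ' ξ₁ + s·w·ξ₂, φ ξ₂)` of the tensor product of a complex
with the Koszul complex of a single function `w`, regarded as a map between the orthogonal
(`L²`) direct sums. -/
def koszulTensorDiff (φ : E₁ →ₗ[ℂ] E₀) (φ' : E₂ →ₗ[ℂ] E₁) (s w : ℂ) :
    WithLp 2 (E₂ × E₁) →ₗ[ℂ] WithLp 2 (E₁ × E₀) :=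
  (WithLp.linearEquiv 2 ℂ (E₁ × E₀)).symm.toLinearMap ∘ₗ
    LinearMap.prod (φ' ∘ₗ LinearMap.fst ℂ E₂ E₁ + (s * w) • LinearMap.snd ℂ E₂ E₁)
      (φ ∘ₗ LinearMap.snd ℂ E₂ E₁) ∘ₗ
    (WithLp.linearEquiv 2 ℂ (E₂ × E₁)).toLinearMap

theorem LinearMap.exists_comp_eq_id_of_bijective {R M : Type*} [Semiring R] [AddCommMonoid M]
    [Module R M] {f : M →ₗ[R] M} (hf : Function.Bijective f) :
    ∃ g : M →ₗ[R] M, g ∘ₗ f = LinearMap.id ∧ f ∘ₗ g = LinearMap.id :=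
  ⟨_, (LinearEquiv.ofBijective f hf).symm_comp, (LinearEquiv.ofBijective f hf).comp_symm⟩

theorem koszulTensorDiff_apply {F₀ F₁ F₂ : Type*}
    [NormedAddCommGroup F₀] [InnerProductSpace ℂ F₀]
    [NormedAddCommGroup F₁] [InnerProductSpace ℂ F₁]
    [NormedAddCommGroup F₂] [InnerProductSpace ℂ F₂]
    (φ : F₁ →ₗ[ℂ] F₀) (φ' : F₂ →ₗ[ℂ] F₁) (s w : ℂ) (v : WithLp 2 (F₂ × F₁)) :
    koszulTensorDiff φ φ' s w v = WithLp.toLp 2 (φ' v.ofLp.1 + (s * w) • v.ofLp.2, φ v.ofLp.2) :=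
  rfl

theorem adjoint_koszulTensorDiff_apply (φ : E₁ →ₗ[ℂ] E₀) (φ' : E₂ →ₗ[ℂ] E₁) (s w : ℂ)
    (v : WithLp 2 (E₁ × E₀)) :
    LinearMap.adjoint (koszulTensorDiff φ φ' s w) v =
      WithLp.toLp 2 (LinearMap.adjoint φ' v.ofLp.1,
        starRingEnd ℂ (s * w) • v.ofLp.1 + LinearMap.adjoint φ v.ofLp.2) := by
  refine ext_inner_left ℂ fun u => ?_
  rw [LinearMap.adjoint_inner_right, koszulTensorDiff_apply]
  simp only [WithLp.prod_inner_apply, inner_add_left, inner_add_right, inner_smul_left,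
    inner_smul_right, LinearMap.adjoint_inner_right]
  ring

theorem koszulTensorDiff_laplacian (φ₁ : E₁ →ₗ[ℂ] E₀) (φ₂ : E₂ →ₗ[ℂ] E₁) (φ₃ : E₃ →ₗ[ℂ] E₂)
    (s w : ℂ) :
    koszulTensorDiff φ₂ φ₃ (-s) w ∘ₗ LinearMap.adjoint (koszulTensorDiff φ₂ φ₃ (-s) w) +
        LinearMap.adjoint (koszulTensorDiff φ₁ φ₂ s w) ∘ₗ koszulTensorDiff φ₁ φ₂ s w =
      LinearMap.withLpMap 2
        ((LinearMap.adjoint φ₂ ∘ₗ φ₂ + φ₃ ∘ₗ LinearMap.adjoint φ₃ +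
            ((‖s * w‖ : ℂ) ^ 2) • LinearMap.id).prodMap
          (φ₂ ∘ₗ LinearMap.adjoint φ₂ + LinearMap.adjoint φ₁ ∘ₗ φ₁ +
            ((‖s * w‖ : ℂ) ^ 2) • LinearMap.id)) := by
  refine LinearMap.ext fun v => ?_
  simp only [LinearMap.add_apply, LinearMap.comp_apply, adjoint_koszulTensorDiff_apply,
    koszulTensorDiff_apply, LinearMap.coe_withLpMap, WithLp.map, LinearMap.prodMap_apply]
  refine WithLp.ofLp_injective 2 (Prod.ext ?_ ?_) <;>
  · simp only [WithLp.ofLp_add, Prod.mk_add_mk, map_add, map_smul, map_neg, neg_mul, neg_smul,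
      smul_add, smul_neg, neg_neg, smul_smul, Complex.mul_conj', Complex.conj_mul',
      LinearMap.smul_apply, LinearMap.id_apply]
    module

/-- For `η(ξ₁, ξ₂) = (φ₂ ξ₁ + s·w·ξ₂, φ₁ ξ₂)` and `η'(ξ₁, ξ₂) = (φ₃ ξ₁ - s·w·ξ₂, φ₂ ξ₂)`,
if `A := φ₂† φ₂ + φ₃ φ₃† + |w|² id` and `B' := φ₂ φ₂† + φ₁† φ₁ + |w|² id` are invertible,
then `η' ∘ η'† + η† ∘ η` is invertible and `σ := (η' ∘ η'† + η† ∘ η)⁻¹ ∘ η†` satisfies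
`σ(0, ζ) = (0, B'⁻¹(φ₁† ζ))`; in particular the component `E₀ → E₂` of `σ` vanishes. -/
theorem koszul_tensor_minimal_inverse_lower_triangular
    (φ₁ : E₁ →ₗ[ℂ] E₀) (φ₂ : E₂ →ₗ[ℂ] E₁) (φ₃ : E₃ →ₗ[ℂ] E₂)
    (w : ℂ) (s : ℂ) (hs : s = 1 ∨ s = -1)
    (hA : Function.Bijective
      ((LinearMap.adjoint φ₂ ∘ₗ φ₂ + φ₃ ∘ₗ LinearMap.adjoint φ₃ +
        ((‖w‖ : ℂ) ^ 2) • LinearMap.id : E₂ →ₗ[ℂ] E₂)))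
    (B'inv : E₁ →ₗ[ℂ] E₁)
    (hB'l : B'inv ∘ₗ (φ₂ ∘ₗ LinearMap.adjoint φ₂ + LinearMap.adjoint φ₁ ∘ₗ φ₁ +
        ((‖w‖ : ℂ) ^ 2) • LinearMap.id) = LinearMap.id)
    (hB'r : (φ₂ ∘ₗ LinearMap.adjoint φ₂ + LinearMap.adjoint φ₁ ∘ₗ φ₁ +
        ((‖w‖ : ℂ) ^ 2) • LinearMap.id) ∘ₗ B'inv = LinearMap.id) :
    ∃ Minv : WithLp 2 (E₂ × E₁) →ₗ[ℂ] WithLp 2 (E₂ × E₁),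
      Minv ∘ₗ (koszulTensorDiff φ₂ φ₃ (-s) w ∘ₗ
          LinearMap.adjoint (koszulTensorDiff φ₂ φ₃ (-s) w) +
        LinearMap.adjoint (koszulTensorDiff φ₁ φ₂ s w) ∘ₗ koszulTensorDiff φ₁ φ₂ s w) =
        LinearMap.id ∧
      (koszulTensorDiff φ₂ φ₃ (-s) w ∘ₗ
          LinearMap.adjoint (koszulTensorDiff φ₂ φ₃ (-s) w) +
        LinearMap.adjoint (koszulTensorDiff φ₁ φ₂ s w) ∘ₗ koszulTensorDiff φ₁ φ₂ s w) ∘ₗ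
        Minv = LinearMap.id ∧
      ∀ ζ : E₀,
        (Minv ∘ₗ LinearMap.adjoint (koszulTensorDiff φ₁ φ₂ s w))
            ((WithLp.linearEquiv 2 ℂ (E₁ × E₀)).symm (0, ζ)) =
          (WithLp.linearEquiv 2 ℂ (E₂ × E₁)).symm (0, B'inv (LinearMap.adjoint φ₁ ζ)) := by
  have hsw : ‖s * w‖ = ‖w‖ := by rcases hs with rfl | rfl <;> simp
  obtain ⟨Ainv, hAl, hAr⟩ := LinearMap.exists_comp_eq_id_of_bijective hA
  refine ⟨LinearMap.withLpMap 2 (Ainv.prodMap B'inv), ?_, ?_, fun ζ => ?_⟩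
  · rw [koszulTensorDiff_laplacian, hsw, ← LinearMap.withLpMap_comp, LinearMap.prodMap_comp,
      hAl, hB'l, LinearMap.prodMap_id, LinearMap.withLpMap_id]
  · rw [koszulTensorDiff_laplacian, hsw, ← LinearMap.withLpMap_comp, LinearMap.prodMap_comp,
      hAr, hB'r, LinearMap.prodMap_id, LinearMap.withLpMap_id]
  · simp [adjoint_koszulTensorDiff_apply]

end
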